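/- arXiv:2107.09327 — 2 statements merged into one kernel-verified Lean document; each statement's English description precedes it below -/
import Mathlib

section
/- Let q be a prime, m a positive integer, and C a nonzero cyclic code of length m over F_q of dimension k such that no codeword of C has Hamming weight m. Then the transitive permutation group G(C) on Z_q × Z_m contains an intersecting set of size q^k = q·|G(C)_v|, hence ρ(G(C)) ≥ q. -/
/-- A set of permutations is intersecting if any two of its elements agree at some point. -/
def Intersecting {V : Type*} (F : Set (Equiv.Perm V)) : Prop :=
  ∀ g ∈ F, ∀ h ∈ F, ∃ v, g v = h v

/-- The permutation of `ZMod q × ZMod m` given by `(i, j) ↦ (i + c j, j)`. -/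
def beta {q m : ℕ} (c : ZMod m → ZMod q) : Equiv.Perm (ZMod q × ZMod m) where
  toFun p := (p.1 + c p.2, p.2)
  invFun p := (p.1 - c p.2, p.2)
  left_inv p := by cases p; simp
  right_inv p := by cases p; simp

/-- The permutation of `ZMod q × ZMod m` given by `(i, j) ↦ (i, j + 1)`. -/
def alpha {q m : ℕ} : Equiv.Perm (ZMod q × ZMod m) where
  toFun p := (p.1, p.2 + 1)
  invFun p := (p.1, p.2 - 1)
  left_inv p := by cases p; simp
  right_inv p := by cases p; simp

/-- The permutation group generated by `alpha` together with `beta c` for codewords `c ∈ C`. -/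
def GC (q m : ℕ) (C : Submodule (ZMod q) (ZMod m → ZMod q)) :
    Subgroup (Equiv.Perm (ZMod q × ZMod m)) :=
  Subgroup.closure ({alpha} ∪ (fun c : ZMod m → ZMod q => beta c) '' ↑C)

/-! Conjugating by `alpha ^ t` shifts the codeword of `beta c`, so for a cyclic code `C` every
element of `GC q m C` is `beta c * alpha ^ t` with `c ∈ C`. Hence the stabiliser of `(i, j)` is the
image under `beta` of the codewords vanishing at `j`, the kernel of a nonzero functional on `C`
(cyclicity moves any nonzero entry to position `j`), and has `q ^ (k - 1)` elements. The `q ^ k`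
permutations `beta c`, `c ∈ C`, pairwise intersect: `beta c` and `beta c'` agree on the zeros of
`c - c' ∈ C`. -/

open Module

section

variable {q m : ℕ}

@[simp]
lemma beta_apply (c : ZMod m → ZMod q) (p : ZMod q × ZMod m) :
    beta c p = (p.1 + c p.2, p.2) := rfl

@[simp]
lemma alpha_pow_apply (t : ℕ) (p : ZMod q × ZMod m) :
    (alpha ^ t : Equiv.Perm (ZMod q × ZMod m)) p = (p.1, p.2 + t) := by
  induction t with
  | zero => simp
  | succ t ih =>
    rw [pow_succ', Equiv.Perm.mul_apply, ih]
    simp [alpha, add_assoc]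

lemma beta_injective : Function.Injective (beta (q := q) (m := m)) := fun c c' h =>
  funext fun j => by simpa using congrArg (fun g => (g (0, j)).1) h

lemma beta_zero : beta (0 : ZMod m → ZMod q) = 1 := by
  ext p <;> simp

lemma beta_add (c c' : ZMod m → ZMod q) : beta (c + c') = beta c * beta c' := by
  ext p <;> simp [add_assoc, add_comm (c p.2)]

lemma beta_neg (c : ZMod m → ZMod q) : beta (-c) = (beta c)⁻¹ :=
  eq_inv_of_mul_eq_one_left (by rw [← beta_add, neg_add_cancel, beta_zero])

lemma alpha_pow_mul_beta (t : ℕ) (c : ZMod m → ZMod q) :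
    alpha ^ t * beta c = beta (fun j => c (j - (t : ZMod m))) * alpha ^ t := by
  ext p <;> simp

lemma alpha_pow_eq_one {t : ℕ} (ht : (t : ZMod m) = 0) :
    (alpha ^ t : Equiv.Perm (ZMod q × ZMod m)) = 1 := by
  ext p <;> simp [ht]

lemma beta_mem_GC {C : Submodule (ZMod q) (ZMod m → ZMod q)} {c : ZMod m → ZMod q}
    (hc : c ∈ C) : beta c ∈ GC q m C :=
  Subgroup.subset_closure (Or.inr ⟨c, hc, rfl⟩)

variable [NeZero m] {C : Submodule (ZMod q) (ZMod m → ZMod q)}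

lemma shift_mem (hcyc : ∀ c ∈ C, (fun j => c (j - 1)) ∈ C) {c : ZMod m → ZMod q} (hc : c ∈ C)
    (a : ZMod m) : (fun j => c (j - a)) ∈ C := by
  rw [← ZMod.natCast_zmod_val a]
  induction a.val with
  | zero => simpa using hc
  | succ n ih => simpa [sub_right_comm _ (1 : ZMod m), sub_sub] using hcyc _ ih

lemma exists_eq_beta_mul_alpha_pow_of_mem_GC (hcyc : ∀ c ∈ C, (fun j => c (j - 1)) ∈ C)
    {g : Equiv.Perm (ZMod q × ZMod m)} (hg : g ∈ GC q m C) :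
    ∃ c ∈ C, ∃ t : ℕ, g = beta c * alpha ^ t := by
  induction hg using Subgroup.closure_induction with
  | mem x hx =>
    rcases hx with rfl | ⟨c, hc, rfl⟩
    · exact ⟨0, C.zero_mem, 1, by rw [beta_zero, one_mul, pow_one]⟩
    · exact ⟨c, hc, 0, by rw [pow_zero, mul_one]⟩
  | one => exact ⟨0, C.zero_mem, 0, by rw [beta_zero, one_mul, pow_zero]⟩
  | mul _ _ _ _ ihx ihy =>
    obtain ⟨c, hc, s, rfl⟩ := ihx
    obtain ⟨c', hc', t, rfl⟩ := ihy
    refine ⟨c + fun j => c' (j - s), C.add_mem hc (shift_mem hcyc hc' _), s + t, ?_⟩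
    rw [beta_add, pow_add, mul_assoc, ← mul_assoc (alpha ^ s), alpha_pow_mul_beta]
    simp only [mul_assoc]
  | inv _ _ ih =>
    obtain ⟨c, hc, s, rfl⟩ := ih
    set t := (-(s : ZMod m)).val
    have hinv : (alpha ^ s)⁻¹ = (alpha ^ t : Equiv.Perm (ZMod q × ZMod m)) :=
      inv_eq_of_mul_eq_one_right (by rw [← pow_add, alpha_pow_eq_one]; simp [t])
    refine ⟨fun j => -c (j - t), shift_mem hcyc (C.neg_mem hc) _, t, ?_⟩
    rw [mul_inv_rev, hinv, ← beta_neg, alpha_pow_mul_beta]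
    rfl

lemma exists_mem_apply_ne_zero (hC : C ≠ ⊥) (hcyc : ∀ c ∈ C, (fun j => c (j - 1)) ∈ C)
    (j : ZMod m) : ∃ c ∈ C, c j ≠ 0 := by
  obtain ⟨c, hc, hc0⟩ := Submodule.exists_mem_ne_zero_of_ne_bot hC
  obtain ⟨i, hi⟩ := Function.ne_iff.mp hc0
  exact ⟨_, shift_mem hcyc hc (j - i), by simpa using hi⟩

lemma stabilizer_GC_eq (hcyc : ∀ c ∈ C, (fun j => c (j - 1)) ∈ C) (v : ZMod q × ZMod m) :
    {g | g ∈ GC q m C ∧ g v = v} =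
      beta '' ↑(C ⊓ LinearMap.ker (LinearMap.proj v.2 : (ZMod m → ZMod q) →ₗ[ZMod q] ZMod q)) := by
  ext g
  constructor
  · rintro ⟨hg, hgv⟩
    obtain ⟨c, hc, t, rfl⟩ := exists_eq_beta_mul_alpha_pow_of_mem_GC hcyc hg
    have ht : (t : ZMod m) = 0 := by simpa using congrArg Prod.snd hgv
    rw [alpha_pow_eq_one ht, mul_one] at hgv ⊢
    exact ⟨c, ⟨hc, by simpa using congrArg Prod.fst hgv⟩, rfl⟩
  · rintro ⟨c, ⟨hc, hcv⟩, rfl⟩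
    exact ⟨beta_mem_GC hc, Prod.ext (by simpa using hcv) rfl⟩

end

lemma finrank_inf_ker_add_one {K V : Type*} [Field K] [AddCommGroup V] [Module K V]
    [FiniteDimensional K V] {C : Submodule K V} {f : Dual K V} (hf : ∃ c ∈ C, f c ≠ 0) :
    finrank K ↥(C ⊓ LinearMap.ker f) + 1 = finrank K C := by
  obtain ⟨c, hc, hfc⟩ := hf
  have hf' : f.domRestrict C ≠ 0 := fun h => hfc (LinearMap.congr_fun h ⟨c, hc⟩)
  rw [← Submodule.map_comap_subtype, Submodule.finrank_map_subtype_eq, ← LinearMap.ker_domRestrict,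
    Dual.finrank_ker_add_one_of_ne_zero hf']

lemma ncard_image_beta {q m : ℕ} [Fact q.Prime] [NeZero m]
    (S : Submodule (ZMod q) (ZMod m → ZMod q)) :
    (beta '' (S : Set (ZMod m → ZMod q))).ncard = q ^ finrank (ZMod q) S := by
  have := Fintype.ofFinite S
  rw [Set.ncard_image_of_injective _ beta_injective, ← Nat.card_coe_set_eq, SetLike.coe_sort_coe,
    Nat.card_eq_fintype_card, card_eq_pow_finrank (K := ZMod q), ZMod.card]

lemma intersecting_image_beta {q m : ℕ} {C : Submodule (ZMod q) (ZMod m → ZMod q)}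
    (hzero : ∀ c ∈ C, ∃ j, c j = 0) : Intersecting (beta '' (C : Set (ZMod m → ZMod q))) := by
  rintro _ ⟨c, hc, rfl⟩ _ ⟨c', hc', rfl⟩
  obtain ⟨j, hj⟩ := hzero _ (C.sub_mem hc hc')
  exact ⟨(0, j), by simp [sub_eq_zero.mp hj]⟩

theorem stmt10 (q m : ℕ) (hq : q.Prime) [NeZero m]
    (C : Submodule (ZMod q) (ZMod m → ZMod q)) (hC : C ≠ ⊥)
    (hcyc : ∀ c ∈ C, (fun j => c (j - 1)) ∈ C)
    (hzero : ∀ c ∈ C, ∃ j, c j = 0) :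
    ∀ v : ZMod q × ZMod m, ∃ F : Set (Equiv.Perm (ZMod q × ZMod m)),
      F ⊆ ↑(GC q m C) ∧ Intersecting F ∧
      F.ncard = q ^ Module.finrank (ZMod q) C ∧
      F.ncard = q * ({g : Equiv.Perm (ZMod q × ZMod m) | g ∈ GC q m C ∧ g v = v}).ncard := by
  have : Fact q.Prime := ⟨hq⟩
  intro v
  refine ⟨beta '' C, ?_, intersecting_image_beta hzero, ncard_image_beta C, ?_⟩
  · rintro _ ⟨c, hc, rfl⟩
    exact beta_mem_GC hc
  · rw [stabilizer_GC_eq hcyc v, ncard_image_beta, ncard_image_beta, ← pow_succ',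
      finrank_inf_ker_add_one (exists_mem_apply_ne_zero hC hcyc v.2)]
end

section
/- Let q be an odd prime and p = (q^k − 1)/(q − 1) be an odd prime for some positive integer k ≥ 2. Suppose there exists a k-dimensional cyclic code C of length p over F_q all of whose nonzero codewords have exactly p − q^{k−1} zero entries. Then there exists a transitive permutation group of degree pq with blocks of size q whose intersection density equals q. -/
def pim {p q : ℕ} (c : ZMod p → ZMod q) (t : ZMod p) : Equiv.Perm (ZMod q × ZMod p) where
  toFun v := (v.1 + c v.2, v.2 + t)
  invFun v := (v.1 - c (v.2 - t), v.2 - t)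
  left_inv v := by simp
  right_inv v := by simp

@[simp] lemma pim_apply {p q : ℕ} (c : ZMod p → ZMod q) (t : ZMod p) (v : ZMod q × ZMod p) :
    pim c t v = (v.1 + c v.2, v.2 + t) := rfl

lemma pim_mul {p q : ℕ} (c c' : ZMod p → ZMod q) (t t' : ZMod p) :
    pim c t * pim c' t' = pim (fun j => c' j + c (j + t')) (t' + t) := by
  ext v <;> simp [pim, Equiv.Perm.mul_apply, add_assoc]

lemma pim_inv {p q : ℕ} (c : ZMod p → ZMod q) (t : ZMod p) :
    (pim c t)⁻¹ = pim (fun j => -c (j - t)) (-t) := by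
  ext v <;> simp [pim, Equiv.Perm.inv_def, sub_eq_add_neg]

lemma pim_inj {p q : ℕ} {c c' : ZMod p → ZMod q} {t t' : ZMod p}
    (h : pim c t = pim c' t') : c = c' ∧ t = t' := by
  constructor
  · funext j
    have := congrArg (fun g : Equiv.Perm (ZMod q × ZMod p) => (g (0, j)).1) h
    simpa using this
  · have := congrArg (fun g : Equiv.Perm (ZMod q × ZMod p) => (g (0, 0)).2) h
    simpa using this

lemma shift_mem_s14 {p q : ℕ} [NeZero p] (C : Submodule (ZMod q) (ZMod p → ZMod q))
    (hcyc : ∀ c ∈ C, (fun j => c (j - 1)) ∈ C) :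
    ∀ c ∈ C, ∀ t : ZMod p, (fun j => c (j + t)) ∈ C := by
  intro c hc t
  have key : ∀ n : ℕ, (fun j => c (j - (n : ZMod p))) ∈ C := by
    intro n
    induction n with
    | zero => simpa using hc
    | succ n ih =>
      have := hcyc _ ih
      have he : (fun j : ZMod p => c (j - 1 - (n : ZMod p))) =
          (fun j : ZMod p => c (j - ((n : ℕ) + 1 : ℕ))) := by
        funext j; push_cast; ring_nf
      rw [he] at this
      exact this
  have := key (-t).val
  have hv : ((-t).val : ZMod p) = -t := by rw [ZMod.natCast_val, ZMod.cast_id]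
  rw [hv] at this
  simpa [sub_neg_eq_add] using this



theorem stmt14 (p q k : ℕ) (hq : q.Prime) (hqodd : Odd q) (hp : p.Prime) (hpodd : Odd p)
    (hk : 2 ≤ k) (hpk : p * (q - 1) = q ^ k - 1)
    (C : Submodule (ZMod q) (ZMod p → ZMod q))
    (hdim : Module.finrank (ZMod q) C = k)
    (hcyc : ∀ c ∈ C, (fun j => c (j - 1)) ∈ C)
    (hwt : ∀ c ∈ C, c ≠ 0 → ({j : ZMod p | c j = 0}).ncard = p - q ^ (k - 1)) :
    ∃ G : Subgroup (Equiv.Perm (ZMod q × ZMod p)),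
      -- G is transitive on the pq points
      (∀ x y : ZMod q × ZMod p, ∃ g ∈ G, g x = y) ∧
      -- the sets Z_q × {j} form a G-invariant block system with blocks of size q
      (∀ g ∈ G, ∀ j : ZMod p, ∃ j' : ZMod p,
        (fun v => g v) '' {v : ZMod q × ZMod p | v.2 = j} = {v : ZMod q × ZMod p | v.2 = j'}) ∧
      (∀ j : ZMod p, ({v : ZMod q × ZMod p | v.2 = j}).ncard = q) ∧
      -- the intersection density of G equals q: the maximum size of an intersecting
      -- set equals q times the order of a point stabilizer
      (∀ v : ZMod q × ZMod p,
        IsGreatest {n | ∃ F : Set (Equiv.Perm (ZMod q × ZMod p)),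
            F ⊆ ↑G ∧ Intersecting F ∧ F.ncard = n}
          (q * ({g : Equiv.Perm (ZMod q × ZMod p) | g ∈ G ∧ g v = v}).ncard)) := by
  haveI : Fact p.Prime := ⟨hp⟩
  haveI : Fact q.Prime := ⟨hq⟩
  haveI : NeZero p := ⟨hp.pos.ne'⟩
  haveI : NeZero q := ⟨hq.pos.ne'⟩
  have hq2 : 2 ≤ q := hq.two_le
  have hshift : ∀ c ∈ C, ∀ t : ZMod p, (fun j => c (j + t)) ∈ C := shift_mem_s14 C hcyc
  -- surjectivity of evaluation
  have hevalne : ∀ j0 : ZMod p, ∃ c ∈ C, c j0 ≠ 0 := by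
    intro j0
    by_contra h
    push_neg at h
    have hbot : C = ⊥ := by
      rw [Submodule.eq_bot_iff]
      intro x hx
      funext j
      have h2 := h _ (hshift x hx (j - j0))
      simpa using h2
    rw [hbot, finrank_bot] at hdim
    omega
  have hevalsurj : ∀ j0 : ZMod p, ∀ b : ZMod q, ∃ c ∈ C, c j0 = b := by
    intro j0 b
    obtain ⟨c, hc, hne⟩ := hevalne j0
    refine ⟨(b * (c j0)⁻¹) • c, C.smul_mem _ hc, ?_⟩
    simp only [Pi.smul_apply, smul_eq_mul]
    field_simp
  -- the group
  let G : Subgroup (Equiv.Perm (ZMod q × ZMod p)) :=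
    { carrier := {g | ∃ c ∈ C, ∃ t, g = pim c t}
      one_mem' := ⟨0, C.zero_mem, 0, Equiv.ext fun v => by simp [pim]⟩
      mul_mem' := by
        rintro a b ⟨c, hc, t, rfl⟩ ⟨c', hc', t', rfl⟩
        rw [pim_mul]
        exact ⟨_, C.add_mem hc' (hshift c hc t'), _, rfl⟩
      inv_mem' := by
        rintro a ⟨c, hc, t, rfl⟩
        rw [pim_inv]
        have h2 : (fun j => -c (j - t)) = -(fun j : ZMod p => c (j + (-t))) := by
          funext j; simp [sub_eq_add_neg]
        exact ⟨_, h2 ▸ C.neg_mem (hshift c hc (-t)), _, rfl⟩ }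
  have hGmem : ∀ g : Equiv.Perm (ZMod q × ZMod p),
      g ∈ G ↔ ∃ c ∈ C, ∃ t, g = pim c t := fun g => Iff.rfl
  -- cardinality of C
  haveI : Fintype C := Fintype.ofFinite C
  have hCcard : Nat.card C = q ^ k := by
    rw [Nat.card_eq_fintype_card, Module.card_eq_pow_finrank (K := ZMod q), hdim, ZMod.card]
  -- q^(k-1) < p
  have ha2 : 2 ≤ q ^ (k - 1) := by
    calc 2 ≤ q := hq2
    _ = q ^ 1 := (pow_one q).symm
    _ ≤ q ^ (k - 1) := Nat.pow_le_pow_right hq.pos (by omega)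
  have hqk : q ^ k = q ^ (k - 1) * q := by
    rw [← pow_succ]; congr 1; omega
  have hlt : q ^ (k - 1) < p := by
    have h3 : q ^ (k - 1) * (q - 1) = q ^ (k - 1) * q - q ^ (k - 1) := Nat.mul_sub_one _ _ ▸ by
      rw [Nat.mul_sub]
    have h4 : q ^ (k - 1) * (q - 1) < p * (q - 1) := by
      rw [hpk, hqk, h3]
      have := Nat.le_mul_of_pos_right (q ^ (k - 1)) hq.pos
      omega
    exact Nat.lt_of_mul_lt_mul_right h4

  have hzero_nonempty : ∀ d ∈ C, d ≠ 0 → ∃ j : ZMod p, d j = 0 := by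
    intro d hd hne
    have hw := hwt d hd hne
    have hpos : ({j : ZMod p | d j = 0}).ncard ≠ 0 := by rw [hw]; omega
    obtain ⟨j, hj⟩ := Set.nonempty_of_ncard_ne_zero hpos
    exact ⟨j, hj⟩
  have hCsetcard : ∀ t0 : ZMod p,
      ((fun c => pim c t0) '' (C : Set (ZMod p → ZMod q))).ncard = q ^ k := by
    intro t0
    rw [Set.ncard_image_of_injOn (fun a _ b _ h => (pim_inj h).1),
      ← Nat.card_coe_set_eq]
    exact hCcard
  refine ⟨G, ?_, ?_, ?_, ?_⟩
  · -- transitivity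
    intro x y
    obtain ⟨c, hc, hcv⟩ := hevalsurj x.2 (y.1 - x.1)
    refine ⟨pim c (y.2 - x.2), (hGmem _).2 ⟨c, hc, _, rfl⟩, ?_⟩
    rw [pim_apply, hcv, Prod.ext_iff]
    constructor <;> simp
  · -- blocks
    intro g hg j
    obtain ⟨c, hc, t, rfl⟩ := (hGmem g).1 hg
    refine ⟨j + t, ?_⟩
    ext w
    simp only [Set.mem_image, Set.mem_setOf_eq, pim_apply]
    constructor
    · rintro ⟨u, hu, rfl⟩; simpa using hu
    · intro hw
      refine ⟨(w.1 - c j, j), rfl, ?_⟩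
      rw [Prod.ext_iff]
      exact ⟨by simp, hw.symm⟩
  · -- block sizes
    intro j
    rw [← Nat.card_coe_set_eq]
    have e : ↥{v : ZMod q × ZMod p | v.2 = j} ≃ ZMod q :=
      { toFun := fun x => x.1.1
        invFun := fun i => ⟨(i, j), rfl⟩
        left_inv := fun x => Subtype.ext (Prod.ext rfl x.2.symm)
        right_inv := fun i => rfl }
    rw [Nat.card_congr e, Nat.card_zmod]
  · -- intersection density
    intro v
    -- stabilizer cardinality
    let K0 : Set (ZMod p → ZMod q) := {c | c ∈ C ∧ c v.2 = 0}
    have hSim : {g : Equiv.Perm (ZMod q × ZMod p) | g ∈ G ∧ g v = v}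
        = (fun c => pim c 0) '' K0 := by
      ext g
      simp only [Set.mem_setOf_eq, Set.mem_image]
      constructor
      · rintro ⟨hgG, hgv⟩
        obtain ⟨c, hc, t, rfl⟩ := (hGmem g).1 hgG
        rw [pim_apply] at hgv
        have h1 : v.1 + c v.2 = v.1 := congrArg Prod.fst hgv
        have h2 : v.2 + t = v.2 := congrArg Prod.snd hgv
        have ht : t = 0 := by
          have := h2; rwa [add_eq_left] at this
        subst ht
        exact ⟨c, ⟨hc, by rwa [add_eq_left] at h1⟩, rfl⟩
      · rintro ⟨c, ⟨hc, hc0⟩, rfl⟩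
        refine ⟨(hGmem _).2 ⟨c, hc, 0, rfl⟩, ?_⟩
        rw [pim_apply, hc0]
        simp
    let e : C →+ ZMod q := AddMonoidHom.mk' (fun x => (x : ZMod p → ZMod q) v.2) (fun a b => rfl)
    have hesurj : Function.Surjective e := by
      intro b; obtain ⟨c, hc, hcb⟩ := hevalsurj v.2 b; exact ⟨⟨c, hc⟩, hcb⟩
    have hquot : Nat.card (C ⧸ e.ker) = q := by
      rw [Nat.card_congr (QuotientAddGroup.quotientKerEquivOfSurjective e hesurj).toEquiv,
        Nat.card_zmod]
    have hker : Nat.card e.ker = q ^ (k - 1) := by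
      have h5 := AddSubgroup.card_eq_card_quotient_mul_card_addSubgroup e.ker
      rw [hCcard, hquot] at h5
      have h6 : q * Nat.card e.ker = q * q ^ (k - 1) := by
        rw [← h5, hqk]; ring
      exact Nat.eq_of_mul_eq_mul_left hq.pos h6
    have hK0card : K0.ncard = q ^ (k - 1) := by
      rw [← Nat.card_coe_set_eq, ← hker]
      exact Nat.card_congr
        { toFun := fun c => ⟨⟨c.1, c.2.1⟩, c.2.2⟩
          invFun := fun x => ⟨x.1.1, x.1.2, x.2⟩
          left_inv := fun c => rfl
          right_inv := fun x => rfl }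
    have hval : q * ({g : Equiv.Perm (ZMod q × ZMod p) | g ∈ G ∧ g v = v}).ncard = q ^ k := by
      rw [hSim, Set.ncard_image_of_injOn (fun a _ b _ h => (pim_inj h).1), hK0card, hqk]
      ring
    rw [hval]
    constructor
    · -- membership: the intersecting family of size q^k
      refine ⟨(fun c => pim c 0) '' (C : Set (ZMod p → ZMod q)), ?_, ?_, hCsetcard 0⟩
      · rintro g ⟨c, hc, rfl⟩; exact (hGmem _).2 ⟨c, hc, 0, rfl⟩
      · rintro g ⟨c, hc, rfl⟩ h ⟨c', hc', rfl⟩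
        by_cases hcc : c = c'
        · subst hcc; exact ⟨(0, 0), rfl⟩
        · have hd : c - c' ∈ C := C.sub_mem hc hc'
          have hdne : c - c' ≠ 0 := sub_ne_zero.mpr hcc
          obtain ⟨j0, hj0⟩ := hzero_nonempty _ hd hdne
          have hcj : c j0 = c' j0 := by simpa [sub_eq_zero] using hj0
          exact ⟨(0, j0), by rw [pim_apply, pim_apply, hcj]⟩
    · -- upper bound
      rintro n ⟨F, hFG, hFint, rfl⟩
      rcases F.eq_empty_or_nonempty with hFe | ⟨g0, hg0⟩
      · simp [hFe]
      · obtain ⟨c0, hc0, t0, hg0eq⟩ := (hGmem g0).1 (hFG hg0)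
        have hsub : F ⊆ (fun c => pim c t0) '' (C : Set (ZMod p → ZMod q)) := by
          intro g hg
          obtain ⟨c, hc, t, rfl⟩ := (hGmem g).1 (hFG hg)
          obtain ⟨w, hw⟩ := hFint _ hg _ hg0
          rw [hg0eq] at hw
          have h2 : w.2 + t = w.2 + t0 := congrArg Prod.snd hw
          have ht : t = t0 := add_left_cancel h2
          exact ⟨c, hc, by rw [ht]⟩
        calc F.ncard ≤ ((fun c => pim c t0) '' (C : Set (ZMod p → ZMod q))).ncard :=
              Set.ncard_le_ncard hsub (Set.toFinite _)
          _ = q ^ k := hCsetcard t0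
end
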